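/- arXiv:2302.11452 — 2 statements merged into one kernel-verified Lean document; each statement's English description precedes it below -/
import Mathlib

section
/- Let A be a type and let α, β, γ, δ be setoids on A forming a pentagon N5. Form the duplication A(β) over β and assume that α₀ ⊓ γ₁ and γ₀ ⊓ α₁ are comparable in Setoid (A(β)). Then the eleven setoids ⊥, γ₀ ⊓ γ₁, α₀ ⊓ α₁, η₀, η₁, γ₀, γ₁, α₀, α₁, β₀, δ₀ are pairwise distinct, the set of these eleven setoids is closed under ⊓ and ⊔ (it is the sublattice of Setoid (A(β)) generated by {α₀, α₁, γ₀, γ₁, β₀}, isomorphic to the lattice M₁ of the paper's Figure 4), and moreover β₀ = β₁, δ₀ = δ₁, α₀ ⊓ γ₁ = γ₀ ⊓ α₁ = γ₀ ⊓ γ₁, γ₀ ⊔ (α₀ ⊓ α₁) = α₀, γ₁ ⊔ (α₀ ⊓ α₁) = α₁, β₀ ⊓ (α₀ ⊓ α₁) = ⊥, α₀ ⊓ η₁ = ⊥, γ₀ ⊔ η₁ = δ₀, γ₁ ⊔ η₀ = δ₀ and β₀ ⊔ (γ₀ ⊓ γ₁) = δ₀. -/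
/-!
The eleven setoids are lattice words in `η₀, η₁, γ₀, γ₁, α₀, α₁, β₀, δ₀`, and a short list of
relations among these eight (`IsM1`) already forces the words to be pairwise distinct and closed
under `⊓` and `⊔`; that part is pure lattice theory, checked pair by pair.

The relations hold in `Setoid (A(β))` because `θ ↦ θ₀` and `θ ↦ θ₁` preserve meets and, the
coordinate projections of `A(β)` being onto, joins, with `⊥₀ = η₀`; because the two coordinates
of a point of `A(β)` are `β`-related, so that `α ⊓ β = ⊥` gives `α₀ ⊓ β₀ = η₀`; and because the
swap of coordinates turns the comparability of `α₀ ⊓ γ₁` and `γ₀ ⊓ α₁` into their equality.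
Distinctness is witnessed on diagonal points `(a, a)` and on points `(a, b)` with `β a b`, `a ≠ b`.
-/

/-! Common setup: the lattice `Setoid A` of equivalence relations on `A`,
the duplication `Dup β = {p : A × A // β p.1 p.2}`, the lifted setoids
`lift0 β θ = θ₀`, `lift1 β θ = θ₁`, the projection kernels `ker0 β = η₀`,
`ker1 β = η₁`, and relational composition `rc`. -/

variable {A : Type*}

/-- The duplication `A(β)`. -/
def Dup (β : Setoid A) : Type _ := {p : A × A // β.r p.1 p.2}

/-- `θ₀`: relate two elements of `A(β)` iff `θ` relates their first coordinates. -/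
def lift0 (β θ : Setoid A) : Setoid (Dup β) :=
  ⟨fun x y => θ.r x.1.1 y.1.1,
   ⟨fun _ => θ.refl' _, fun h => θ.symm' h, fun h h' => θ.trans' h h'⟩⟩

/-- `θ₁`: relate two elements of `A(β)` iff `θ` relates their second coordinates. -/
def lift1 (β θ : Setoid A) : Setoid (Dup β) :=
  ⟨fun x y => θ.r x.1.2 y.1.2,
   ⟨fun _ => θ.refl' _, fun h => θ.symm' h, fun h h' => θ.trans' h h'⟩⟩

/-- `η₀`: kernel of the first projection. -/
def ker0 (β : Setoid A) : Setoid (Dup β) :=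
  ⟨fun x y => x.1.1 = y.1.1, ⟨fun _ => rfl, Eq.symm, Eq.trans⟩⟩

/-- `η₁`: kernel of the second projection. -/
def ker1 (β : Setoid A) : Setoid (Dup β) :=
  ⟨fun x y => x.1.2 = y.1.2, ⟨fun _ => rfl, Eq.symm, Eq.trans⟩⟩

/-- Relational composition. -/
def rc {B : Type*} (r s : B → B → Prop) : B → B → Prop :=
  fun a b => ∃ c, r a c ∧ s c b

/-- `α, β, γ, δ` form a pentagon `N₅` in `Setoid A`. -/
def IsN5 (α β γ δ : Setoid A) : Prop :=
  ⊥ < γ ∧ γ < α ∧ α < δ ∧ α ⊓ β = ⊥ ∧ γ ⊔ β = δ ∧ α ⊔ β = δ ∧ β ≠ ⊥ ∧ β ≠ δ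


open Function

theorem Setoid.comap_sup_of_surjective {X Y : Type*} {f : X → Y} (hf : Surjective f)
    (r s : Setoid Y) : (r ⊔ s).comap f = r.comap f ⊔ s.comap f := by
  refine le_antisymm ?_ (sup_le (fun _ _ h => le_sup_left (b := s) h)
    (fun _ _ h => le_sup_right (a := r) h))
  set T := r.comap f ⊔ s.comap f
  have hsec : r ⊔ s ≤ T.comap (surjInv hf) := by
    refine sup_le (fun _ _ h => le_sup_left (b := s.comap f) ?_)
      (fun _ _ h => le_sup_right (a := r.comap f) ?_) <;>
      simpa only [Setoid.comap_rel, surjInv_eq hf]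
  have hx : ∀ x, T x (surjInv hf (f x)) := fun x =>
    le_sup_left (b := s.comap f) (by simp only [Setoid.comap_rel, surjInv_eq hf]; exact r.refl' _)
  exact fun x y hxy => T.trans' (hx x) (T.trans' (hsec hxy) (T.symm' (hx y)))

section Duplication

variable (β : Setoid A)

def Dup.diag (a : A) : Dup β := ⟨(a, a), β.refl' a⟩

def Dup.swap (x : Dup β) : Dup β := ⟨(x.1.2, x.1.1), β.symm' x.2⟩

theorem Dup.fst_surjective : Surjective fun x : Dup β => x.1.1 :=
  fun a => ⟨Dup.diag β a, rfl⟩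

theorem Dup.snd_surjective : Surjective fun x : Dup β => x.1.2 :=
  fun a => ⟨Dup.diag β a, rfl⟩

theorem lift0_mono : Monotone (lift0 β) := fun _ _ h _ _ hxy => h hxy

theorem lift1_mono : Monotone (lift1 β) := fun _ _ h _ _ hxy => h hxy

theorem lift0_inf (θ θ' : Setoid A) : lift0 β (θ ⊓ θ') = lift0 β θ ⊓ lift0 β θ' := rfl

theorem lift1_inf (θ θ' : Setoid A) : lift1 β (θ ⊓ θ') = lift1 β θ ⊓ lift1 β θ' := rfl

theorem lift0_sup (θ θ' : Setoid A) : lift0 β (θ ⊔ θ') = lift0 β θ ⊔ lift0 β θ' :=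
  Setoid.comap_sup_of_surjective (Dup.fst_surjective β) θ θ'

theorem lift1_sup (θ θ' : Setoid A) : lift1 β (θ ⊔ θ') = lift1 β θ ⊔ lift1 β θ' :=
  Setoid.comap_sup_of_surjective (Dup.snd_surjective β) θ θ'

theorem lift0_bot : lift0 β ⊥ = ker0 β :=
  Setoid.ext fun x y => show (⊥ : Setoid A) x.1.1 y.1.1 ↔ _ by rw [Setoid.bot_def]; rfl

theorem lift1_bot : lift1 β ⊥ = ker1 β :=
  Setoid.ext fun x y => show (⊥ : Setoid A) x.1.2 y.1.2 ↔ _ by rw [Setoid.bot_def]; rfl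

theorem ker0_le_lift0 (θ : Setoid A) : ker0 β ≤ lift0 β θ :=
  lift0_bot β ▸ lift0_mono β bot_le

theorem ker1_le_lift1 (θ : Setoid A) : ker1 β ≤ lift1 β θ :=
  lift1_bot β ▸ lift1_mono β bot_le

theorem lift0_eq_lift1 {θ : Setoid A} (h : β ≤ θ) : lift0 β θ = lift1 β θ :=
  Setoid.ext fun x y =>
    ⟨fun hxy => θ.trans' (θ.symm' (h x.2)) (θ.trans' hxy (h y.2)),
     fun hxy => θ.trans' (h x.2) (θ.trans' hxy (θ.symm' (h y.2)))⟩

theorem ker0_inf_ker1 : ker0 β ⊓ ker1 β = ⊥ :=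
  eq_bot_iff.2 fun x y hxy => by
    rw [Setoid.bot_def]
    exact Subtype.ext (Prod.ext hxy.1 hxy.2)

theorem lift0_inf_lift0 {θ θ' : Setoid A} (h : θ ⊓ θ' = ⊥) :
    lift0 β θ ⊓ lift0 β θ' = ker0 β := by
  rw [← lift0_inf, h, lift0_bot]

theorem lift1_inf_lift1 {θ θ' : Setoid A} (h : θ ⊓ θ' = ⊥) :
    lift1 β θ ⊓ lift1 β θ' = ker1 β := by
  rw [← lift1_inf, h, lift1_bot]

theorem ker0_sup_ker1 : ker0 β ⊔ ker1 β = lift0 β β := by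
  refine le_antisymm (sup_le (ker0_le_lift0 β β) (lift0_eq_lift1 β le_rfl ▸ ker1_le_lift1 β β))
    fun x y hxy => ?_
  let z : Dup β := ⟨(x.1.1, y.1.2), β.trans' hxy y.2⟩
  exact (ker0 β ⊔ ker1 β).trans' (le_sup_left (b := ker1 β) (x := x) (y := z) rfl)
    (le_sup_right (a := ker0 β) (x := z) (y := y) rfl)

theorem ker0_sup_lift0_inf_lift1 (θ : Setoid A) :
    ker0 β ⊔ (lift0 β θ ⊓ lift1 β θ) = lift0 β θ := by
  refine le_antisymm (sup_le (ker0_le_lift0 β θ) inf_le_left) fun x y hxy => ?_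
  set T := ker0 β ⊔ (lift0 β θ ⊓ lift1 β θ)
  have hdiag : ∀ z : Dup β, T z (Dup.diag β z.1.1) := fun _ =>
    le_sup_left (b := lift0 β θ ⊓ lift1 β θ) rfl
  exact T.trans' (hdiag x) (T.trans' (le_sup_right (a := ker0 β)
    (x := Dup.diag β x.1.1) (y := Dup.diag β y.1.1) ⟨hxy, hxy⟩) (T.symm' (hdiag y)))

theorem ker1_sup_lift0_inf_lift1 (θ : Setoid A) :
    ker1 β ⊔ (lift0 β θ ⊓ lift1 β θ) = lift1 β θ := by
  refine le_antisymm (sup_le (ker1_le_lift1 β θ) inf_le_right) fun x y hxy => ?_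
  set T := ker1 β ⊔ (lift0 β θ ⊓ lift1 β θ)
  have hdiag : ∀ z : Dup β, T z (Dup.diag β z.1.2) := fun _ =>
    le_sup_left (b := lift0 β θ ⊓ lift1 β θ) rfl
  exact T.trans' (hdiag x) (T.trans' (le_sup_right (a := ker1 β)
    (x := Dup.diag β x.1.2) (y := Dup.diag β y.1.2) ⟨hxy, hxy⟩) (T.symm' (hdiag y)))

theorem lift0_inf_lift1_ge_of_le {θ θ' : Setoid A}
    (h : lift0 β θ ⊓ lift1 β θ' ≤ lift0 β θ' ⊓ lift1 β θ) :
    lift0 β θ' ⊓ lift1 β θ ≤ lift0 β θ ⊓ lift1 β θ' := fun x y hxy =>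
  have := h (x := x.swap) (y := y.swap) ⟨hxy.2, hxy.1⟩
  ⟨this.2, this.1⟩

theorem lift0_inf_lift1_eq_of_le_or_le {θ θ' : Setoid A}
    (h : lift0 β θ ⊓ lift1 β θ' ≤ lift0 β θ' ⊓ lift1 β θ ∨
      lift0 β θ' ⊓ lift1 β θ ≤ lift0 β θ ⊓ lift1 β θ') :
    lift0 β θ ⊓ lift1 β θ' = lift0 β θ' ⊓ lift1 β θ :=
  h.elim (fun h => le_antisymm h (lift0_inf_lift1_ge_of_le β h))
    (fun h => le_antisymm (lift0_inf_lift1_ge_of_le β h) h)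

theorem le_of_lift0_inf_lift1_le_lift0 {θ θ' : Setoid A}
    (h : lift0 β θ ⊓ lift1 β θ ≤ lift0 β θ') : θ ≤ θ' := fun a b hab =>
  h (x := Dup.diag β a) (y := Dup.diag β b) ⟨hab, hab⟩

theorem le_of_lift0_inf_lift1_le_lift1 {θ θ' : Setoid A}
    (h : lift0 β θ ⊓ lift1 β θ ≤ lift1 β θ') : θ ≤ θ' := fun a b hab =>
  h (x := Dup.diag β a) (y := Dup.diag β b) ⟨hab, hab⟩

theorem le_of_ker0_le_lift1 {θ : Setoid A} (h : ker0 β ≤ lift1 β θ) : β ≤ θ := fun a b hab =>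
  h (x := Dup.diag β a) (y := ⟨(a, b), hab⟩) rfl

theorem le_of_ker1_le_lift0 {θ : Setoid A} (h : ker1 β ≤ lift0 β θ) : β ≤ θ := fun a b hab =>
  h (x := ⟨(a, b), hab⟩) (y := Dup.diag β b) rfl

end Duplication

theorem List.Pairwise.mem_of_comm_of_idem {α : Type*} {l : List α} {f : α → α → α}
    (hcomm : ∀ a b, f a b = f b a) (hidem : ∀ a, f a a = a)
    (h : l.Pairwise fun a b => f a b ∈ l) {a b : α} (ha : a ∈ l) (hb : b ∈ l) : f a b ∈ l :=
  h.forall_of_forall_of_flip (fun a ha => (hidem a).symm ▸ ha)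
    (h.imp fun {a b} hab => show f b a ∈ l from hcomm a b ▸ hab) ha hb

section M1

variable {L : Type*} [Lattice L] [OrderBot L]

structure IsM1 (η₀ η₁ γ₀ γ₁ α₀ α₁ β₀ δ₀ : L) : Prop where
  eta0_le_gamma0 : η₀ ≤ γ₀
  eta1_le_gamma1 : η₁ ≤ γ₁
  gamma0_le_alpha0 : γ₀ ≤ α₀
  gamma1_le_alpha1 : γ₁ ≤ α₁
  eta0_le_beta0 : η₀ ≤ β₀
  eta1_le_beta0 : η₁ ≤ β₀
  alpha0_le_delta0 : α₀ ≤ δ₀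
  alpha1_le_delta0 : α₁ ≤ δ₀
  beta0_le_delta0 : β₀ ≤ δ₀

  eta0_inf_eta1 : η₀ ⊓ η₁ = ⊥
  alpha0_inf_beta0_le : α₀ ⊓ β₀ ≤ η₀
  alpha1_inf_beta0_le : α₁ ⊓ β₀ ≤ η₁
  alpha0_inf_gamma1 : α₀ ⊓ γ₁ = γ₀ ⊓ α₁

  gamma0_le_sup : γ₀ ≤ η₀ ⊔ γ₀ ⊓ γ₁
  gamma1_le_sup : γ₁ ≤ η₁ ⊔ γ₀ ⊓ γ₁
  alpha0_le_sup : α₀ ≤ η₀ ⊔ α₀ ⊓ α₁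
  alpha1_le_sup : α₁ ≤ η₁ ⊔ α₀ ⊓ α₁
  beta0_le_sup : β₀ ≤ η₀ ⊔ η₁
  delta0_le_gamma0_sup : δ₀ ≤ γ₀ ⊔ β₀
  delta0_le_gamma1_sup : δ₀ ≤ γ₁ ⊔ β₀

  not_inf_gamma_le_beta0 : ¬γ₀ ⊓ γ₁ ≤ β₀
  not_inf_alpha_le_gamma0 : ¬α₀ ⊓ α₁ ≤ γ₀
  not_inf_alpha_le_gamma1 : ¬α₀ ⊓ α₁ ≤ γ₁
  not_eta0_le_alpha1 : ¬η₀ ≤ α₁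
  not_eta1_le_alpha0 : ¬η₁ ≤ α₀

def m1List (η₀ η₁ γ₀ γ₁ α₀ α₁ β₀ δ₀ : L) : List L :=
  [⊥, γ₀ ⊓ γ₁, α₀ ⊓ α₁, η₀, η₁, γ₀, γ₁, α₀, α₁, β₀, δ₀]

def m1Set (η₀ η₁ γ₀ γ₁ α₀ α₁ β₀ δ₀ : L) : Set L :=
  {⊥, γ₀ ⊓ γ₁, α₀ ⊓ α₁, η₀, η₁, γ₀, γ₁, α₀, α₁, β₀, δ₀}

variable {η₀ η₁ γ₀ γ₁ α₀ α₁ β₀ δ₀ : L}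

theorem mem_m1Set {x : L} :
    x ∈ m1Set η₀ η₁ γ₀ γ₁ α₀ α₁ β₀ δ₀ ↔ x ∈ m1List η₀ η₁ γ₀ γ₁ α₀ α₁ β₀ δ₀ := by
  simp only [m1Set, m1List, Set.mem_insert_iff, Set.mem_singleton_iff, List.mem_cons,
    List.not_mem_nil, or_false]

namespace IsM1

theorem pairwise_ne (h : IsM1 η₀ η₁ γ₀ γ₁ α₀ α₁ β₀ δ₀) :
    (m1List η₀ η₁ γ₀ γ₁ α₀ α₁ β₀ δ₀).Pairwise (· ≠ ·) := by
  -- Each check keeps only the relations it needs: `order` slows down sharply with every one added.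
  obtain ⟨_, _, _, _, _, _, _, _, _, -, -, -, -, -, -, -, -, -, -, -, _, _, _, _, _⟩ := h
  simp only [m1List, List.pairwise_cons, List.forall_mem_cons, List.not_mem_nil,
    IsEmpty.forall_iff, implies_true, List.Pairwise.nil, and_true]
  and_intros <;> order

set_option maxHeartbeats 1000000 in
theorem pairwise_inf_mem (h : IsM1 η₀ η₁ γ₀ γ₁ α₀ α₁ β₀ δ₀) :
    (m1List η₀ η₁ γ₀ γ₁ α₀ α₁ β₀ δ₀).Pairwise
      fun x y => x ⊓ y ∈ m1List η₀ η₁ γ₀ γ₁ α₀ α₁ β₀ δ₀ := by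
  obtain ⟨_, _, _, _, _, _, _, _, _, _, _, _, _, -, -, -, -, -, -, -, -, -, -, -, -⟩ := h
  simp only [m1List, List.pairwise_cons, List.forall_mem_cons, List.not_mem_nil,
    IsEmpty.forall_iff, implies_true, List.Pairwise.nil, and_true]
  and_intros <;> simp only [List.mem_cons, List.not_mem_nil, or_false, or_true, true_or,
    bot_inf_eq] <;>
    by_contra hne <;> simp only [not_or] at hne <;> order

set_option maxHeartbeats 1000000 in
theorem pairwise_sup_mem (h : IsM1 η₀ η₁ γ₀ γ₁ α₀ α₁ β₀ δ₀) :
    (m1List η₀ η₁ γ₀ γ₁ α₀ α₁ β₀ δ₀).Pairwise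
      fun x y => x ⊔ y ∈ m1List η₀ η₁ γ₀ γ₁ α₀ α₁ β₀ δ₀ := by
  obtain ⟨_, _, _, _, _, _, _, _, _, -, -, -, -, _, _, _, _, _, _, _, -, -, -, -, -⟩ := h
  simp only [m1List, List.pairwise_cons, List.forall_mem_cons, List.not_mem_nil,
    IsEmpty.forall_iff, implies_true, List.Pairwise.nil, and_true]
  and_intros <;> simp only [List.mem_cons, List.not_mem_nil, or_false, or_true, true_or,
    bot_sup_eq] <;>
    by_contra hne <;> simp only [not_or] at hne <;> order

theorem inf_mem (h : IsM1 η₀ η₁ γ₀ γ₁ α₀ α₁ β₀ δ₀) {x y : L}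
    (hx : x ∈ m1Set η₀ η₁ γ₀ γ₁ α₀ α₁ β₀ δ₀) (hy : y ∈ m1Set η₀ η₁ γ₀ γ₁ α₀ α₁ β₀ δ₀) :
    x ⊓ y ∈ m1Set η₀ η₁ γ₀ γ₁ α₀ α₁ β₀ δ₀ :=
  mem_m1Set.2 <| h.pairwise_inf_mem.mem_of_comm_of_idem inf_comm inf_idem
    (mem_m1Set.1 hx) (mem_m1Set.1 hy)

theorem sup_mem (h : IsM1 η₀ η₁ γ₀ γ₁ α₀ α₁ β₀ δ₀) {x y : L}
    (hx : x ∈ m1Set η₀ η₁ γ₀ γ₁ α₀ α₁ β₀ δ₀) (hy : y ∈ m1Set η₀ η₁ γ₀ γ₁ α₀ α₁ β₀ δ₀) :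
    x ⊔ y ∈ m1Set η₀ η₁ γ₀ γ₁ α₀ α₁ β₀ δ₀ :=
  mem_m1Set.2 <| h.pairwise_sup_mem.mem_of_comm_of_idem sup_comm sup_idem
    (mem_m1Set.1 hx) (mem_m1Set.1 hy)

end IsM1

end M1

theorem IsN5.beta_le_delta {α β γ δ : Setoid A} (h : IsN5 α β γ δ) : β ≤ δ := by
  obtain ⟨-, -, -, -, hγβ, -⟩ := h
  exact hγβ ▸ le_sup_right

theorem IsN5.isM1 {α β γ δ : Setoid A} (h : IsN5 α β γ δ)
    (hcomp : lift0 β α ⊓ lift1 β γ ≤ lift0 β γ ⊓ lift1 β α ∨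
      lift0 β γ ⊓ lift1 β α ≤ lift0 β α ⊓ lift1 β γ) :
    IsM1 (ker0 β) (ker1 β) (lift0 β γ) (lift1 β γ) (lift0 β α) (lift1 β α) (lift0 β β)
      (lift0 β δ) := by
  have hβδ := h.beta_le_delta
  obtain ⟨hγ, hγα, hαδ, hαβ, hγβ, -, hβ, -⟩ := h
  have hβ₁ : lift0 β β = lift1 β β := lift0_eq_lift1 β le_rfl
  have hδ₁ : lift0 β δ = lift1 β δ := lift0_eq_lift1 β hβδ
  have hdisj : Disjoint α β := disjoint_iff.2 hαβ
  exact
    { eta0_le_gamma0 := ker0_le_lift0 β γ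
      eta1_le_gamma1 := ker1_le_lift1 β γ
      gamma0_le_alpha0 := lift0_mono β hγα.le
      gamma1_le_alpha1 := lift1_mono β hγα.le
      eta0_le_beta0 := ker0_le_lift0 β β
      eta1_le_beta0 := hβ₁ ▸ ker1_le_lift1 β β
      alpha0_le_delta0 := lift0_mono β hαδ.le
      alpha1_le_delta0 := hδ₁ ▸ lift1_mono β hαδ.le
      beta0_le_delta0 := lift0_mono β hβδ
      eta0_inf_eta1 := ker0_inf_ker1 β
      alpha0_inf_beta0_le := (lift0_inf_lift0 β hαβ).le
      alpha1_inf_beta0_le := hβ₁ ▸ (lift1_inf_lift1 β hαβ).le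
      alpha0_inf_gamma1 := lift0_inf_lift1_eq_of_le_or_le β hcomp
      gamma0_le_sup := (ker0_sup_lift0_inf_lift1 β γ).ge
      gamma1_le_sup := (ker1_sup_lift0_inf_lift1 β γ).ge
      alpha0_le_sup := (ker0_sup_lift0_inf_lift1 β α).ge
      alpha1_le_sup := (ker1_sup_lift0_inf_lift1 β α).ge
      beta0_le_sup := (ker0_sup_ker1 β).ge
      delta0_le_gamma0_sup := (hγβ ▸ lift0_sup β γ β).le
      delta0_le_gamma1_sup := hδ₁ ▸ hβ₁ ▸ (hγβ ▸ lift1_sup β γ β).le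
      not_inf_gamma_le_beta0 := fun hle =>
        hγ.ne' ((hdisj.mono_left hγα.le).eq_bot_of_le (le_of_lift0_inf_lift1_le_lift0 β hle))
      not_inf_alpha_le_gamma0 := fun hle => hγα.not_ge (le_of_lift0_inf_lift1_le_lift0 β hle)
      not_inf_alpha_le_gamma1 := fun hle => hγα.not_ge (le_of_lift0_inf_lift1_le_lift1 β hle)
      not_eta0_le_alpha1 := fun hle => hβ (hdisj.eq_bot_of_ge (le_of_ker0_le_lift1 β hle))
      not_eta1_le_alpha0 := fun hle => hβ (hdisj.eq_bot_of_ge (le_of_ker1_le_lift0 β hle)) }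

/-- Corollary 3.4: the lattice `M₁` inside `Setoid (A(β))`, Figure 4. -/
theorem M1_sublattice (α β γ δ : Setoid A) (h : IsN5 α β γ δ)
    (hcomp : lift0 β α ⊓ lift1 β γ ≤ lift0 β γ ⊓ lift1 β α ∨
      lift0 β γ ⊓ lift1 β α ≤ lift0 β α ⊓ lift1 β γ) :
    [(⊥ : Setoid (Dup β)), lift0 β γ ⊓ lift1 β γ, lift0 β α ⊓ lift1 β α,
      ker0 β, ker1 β, lift0 β γ, lift1 β γ, lift0 β α, lift1 β α,
      lift0 β β, lift0 β δ].Pairwise (· ≠ ·) ∧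
    (∀ x ∈ ({⊥, lift0 β γ ⊓ lift1 β γ, lift0 β α ⊓ lift1 β α,
        ker0 β, ker1 β, lift0 β γ, lift1 β γ, lift0 β α, lift1 β α,
        lift0 β β, lift0 β δ} : Set (Setoid (Dup β))),
      ∀ y ∈ ({⊥, lift0 β γ ⊓ lift1 β γ, lift0 β α ⊓ lift1 β α,
        ker0 β, ker1 β, lift0 β γ, lift1 β γ, lift0 β α, lift1 β α,
        lift0 β β, lift0 β δ} : Set (Setoid (Dup β))),
      x ⊓ y ∈ ({⊥, lift0 β γ ⊓ lift1 β γ, lift0 β α ⊓ lift1 β α,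
        ker0 β, ker1 β, lift0 β γ, lift1 β γ, lift0 β α, lift1 β α,
        lift0 β β, lift0 β δ} : Set (Setoid (Dup β))) ∧
      x ⊔ y ∈ ({⊥, lift0 β γ ⊓ lift1 β γ, lift0 β α ⊓ lift1 β α,
        ker0 β, ker1 β, lift0 β γ, lift1 β γ, lift0 β α, lift1 β α,
        lift0 β β, lift0 β δ} : Set (Setoid (Dup β)))) ∧
    lift0 β β = lift1 β β ∧
    lift0 β δ = lift1 β δ ∧
    lift0 β α ⊓ lift1 β γ = lift0 β γ ⊓ lift1 β α ∧
    lift0 β γ ⊓ lift1 β α = lift0 β γ ⊓ lift1 β γ ∧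
    lift0 β γ ⊔ (lift0 β α ⊓ lift1 β α) = lift0 β α ∧
    lift1 β γ ⊔ (lift0 β α ⊓ lift1 β α) = lift1 β α ∧
    lift0 β β ⊓ (lift0 β α ⊓ lift1 β α) = ⊥ ∧
    lift0 β α ⊓ ker1 β = ⊥ ∧
    lift0 β γ ⊔ ker1 β = lift0 β δ ∧
    lift1 β γ ⊔ ker0 β = lift0 β δ ∧
    lift0 β β ⊔ (lift0 β γ ⊓ lift1 β γ) = lift0 β δ := by
  have hM1 := h.isM1 hcomp
  refine ⟨hM1.pairwise_ne, fun x hx y hy => ⟨hM1.inf_mem hx hy, hM1.sup_mem hx hy⟩,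
    lift0_eq_lift1 β le_rfl, lift0_eq_lift1 β h.beta_le_delta, hM1.alpha0_inf_gamma1, ?_⟩
  obtain ⟨_, _, _, _, _, _, _, _, _, _, _, _, _, _, _, _, _, _, _, _, -, -, -, -, -⟩ := hM1
  and_intros <;> order
end

section
/- Let A be a type and let α, β, γ, δ be setoids on A forming a pairwise permuting diamond M3 with bottom ⊥. Form the duplication A(γ) over γ. Then in Setoid (A(γ)): β₀ ∘ α₁ = β₀ ⊔ α₁ = δ₀. -/
/-! Common setup: the lattice `Setoid A` of equivalence relations on `A`,
the duplication `Dup β = {p : A × A // β p.1 p.2}`, the lifted setoids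
`lift0 β θ = θ₀`, `lift1 β θ = θ₁`, the projection kernels `ker0 β = η₀`,
`ker1 β = η₁`, and relational composition `rc`. -/

variable {A : Type*}

/-- `α, β, γ, δ` form a diamond `M₃` with bottom `⊥` in `Setoid A`. -/
def IsM3 (α β γ δ : Setoid A) : Prop :=
  α ⊓ β = ⊥ ∧ α ⊓ γ = ⊥ ∧ β ⊓ γ = ⊥ ∧
  α ⊔ β = δ ∧ α ⊔ γ = δ ∧ β ⊔ γ = δ ∧
  α ≠ β ∧ α ≠ γ ∧ β ≠ γ ∧
  α ≠ ⊥ ∧ β ≠ ⊥ ∧ γ ≠ ⊥ ∧ α ≠ δ ∧ β ≠ δ ∧ γ ≠ δ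

/-- The diamond is pairwise permuting. -/
def M3Permutes (α β γ : Setoid A) : Prop :=
  rc α.r β.r = rc β.r α.r ∧ rc α.r γ.r = rc γ.r α.r ∧
  rc β.r γ.r = rc γ.r β.r

theorem rc_le_sup {B : Type*} (r s : Setoid B) : rc r.r s.r ≤ (r ⊔ s).r := by
  rintro a b ⟨c, hac, hcb⟩
  exact (r ⊔ s).trans' (le_sup_left (b := s) hac) (le_sup_right (a := r) hcb)

theorem equivalence_rc_of_permute {B : Type*} (r s : Setoid B) (hrs : rc r.r s.r = rc s.r r.r) :
    Equivalence (rc r.r s.r) where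
  refl a := ⟨a, r.refl' a, s.refl' a⟩
  symm := by
    rintro a b ⟨c, hac, hcb⟩
    rw [hrs]
    exact ⟨c, s.symm' hcb, r.symm' hac⟩
  trans := by
    rintro a b c ⟨d, had, hdb⟩ ⟨e, hbe, hec⟩
    obtain ⟨f, hdf, hfe⟩ : rc r.r s.r d e := hrs ▸ ⟨b, hdb, hbe⟩
    exact ⟨f, r.trans' had hdf, s.trans' hfe hec⟩

theorem sup_r_le_rc_of_permute {B : Type*} (r s : Setoid B) (hrs : rc r.r s.r = rc s.r r.r) :
    (r ⊔ s).r ≤ rc r.r s.r :=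
  show r ⊔ s ≤ ⟨rc r.r s.r, equivalence_rc_of_permute r s hrs⟩ from
    sup_le (fun _ b hab => ⟨b, hab, s.refl' b⟩) (fun a _ hab => ⟨a, r.refl' a, hab⟩)

theorem rc_eq_sup_and_sup_eq_of_le_rc {B : Type*} {r s t : Setoid B} (hle : r ⊔ s ≤ t)
    (hrc : t.r ≤ rc r.r s.r) : rc r.r s.r = (r ⊔ s).r ∧ r ⊔ s = t := by
  have hsup : r ⊔ s = t := le_antisymm hle fun a b h => rc_le_sup r s a b (hrc a b h)
  refine ⟨le_antisymm (rc_le_sup r s) ?_, hsup⟩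
  rw [hsup]
  exact hrc

theorem lift0_mono_s16 (γ : Setoid A) {β δ : Setoid A} (hβδ : β ≤ δ) : lift0 γ β ≤ lift0 γ δ :=
  fun _ _ h => hβδ h

/-- Both coordinates of a point of `A(γ)` are `γ`-related, so `γ ≤ δ` transfers `δ` between them. -/
theorem lift1_le_lift0 {α γ δ : Setoid A} (hαδ : α ≤ δ) (hγδ : γ ≤ δ) :
    lift1 γ α ≤ lift0 γ δ :=
  fun x y h => δ.trans' (δ.trans' (hγδ x.2) (hαδ h)) (δ.symm' (hγδ y.2))

/-- A `β ∘ γ`-path from `x.1` to `z.2` through `c` yields the intermediate point `(c, z.2)` of `A(γ)`. -/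
theorem lift0_r_le_rc_lift0_lift1 (α : Setoid A) {β γ δ : Setoid A} (hγδ : γ ≤ δ)
    (hδ : δ.r ≤ rc β.r γ.r) : (lift0 γ δ).r ≤ rc (lift0 γ β).r (lift1 γ α).r := by
  intro x z hxz
  obtain ⟨c, hxc, hcz⟩ := hδ _ _ (δ.trans' hxz (hγδ z.2))
  exact ⟨⟨(c, z.1.2), hcz⟩, hxc, α.refl' _⟩

/-- Lemma 4.2(4). -/
theorem permute_lemma_4 (α β γ δ : Setoid A) (h : IsM3 α β γ δ)
    (hperm : M3Permutes α β γ) :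
    rc (lift0 γ β).r (lift1 γ α).r = (lift0 γ β ⊔ lift1 γ α).r ∧
    lift0 γ β ⊔ lift1 γ α = lift0 γ δ := by
  obtain ⟨-, -, -, hαβ, hαγ, hβγ, -⟩ := h
  obtain ⟨-, -, hβγ_perm⟩ := hperm
  have hαδ : α ≤ δ := hαβ ▸ le_sup_left
  have hβδ : β ≤ δ := hαβ ▸ le_sup_right
  have hγδ : γ ≤ δ := hαγ ▸ le_sup_right
  have hδ : δ.r ≤ rc β.r γ.r := hβγ ▸ sup_r_le_rc_of_permute β γ hβγ_perm
  exact rc_eq_sup_and_sup_eq_of_le_rc (sup_le (lift0_mono_s16 γ hβδ) (lift1_le_lift0 hαδ hγδ))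
    (lift0_r_le_rc_lift0_lift1 α hγδ hδ)
end
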